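/- arXiv:2103.06670 — 2 statements merged into one kernel-verified Lean document; each statement's English description precedes it below -/
import Mathlib

section
/- Let d ≥ 1 and let μ be a Borel probability measure on GL_d(ℝ) having a finite exponential moment, i.e. ∫ max(‖g‖, ‖g⁻¹‖)^β dμ(g) < ∞ for some β > 0. Let λ₁ ∈ ℝ be such that (1/m)∫ log‖g‖ dμ^{*m}(g) → λ₁ as m → ∞. Then for every ω > 0 there exist κ > 0 and M ∈ ℕ such that for all m ≥ M, μ^{*m}({g ∈ GL_d(ℝ) : log‖g‖ > m(λ₁ + ω)}) ≤ e^{−κm}. -/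
open MeasureTheory Filter
open scoped ENNReal NNReal

noncomputable section

instance matrixMeasurableSpace {m n α : Type*} [MeasurableSpace α] :
    MeasurableSpace (Matrix m n α) := by unfold Matrix; infer_instance

/-- The operator norm of a real matrix, acting on Euclidean space `ℝ^d`. -/
def opNormR {d : ℕ} (g : Matrix (Fin d) (Fin d) ℝ) : ℝ :=
  ‖LinearMap.toContinuousLinearMap (Matrix.toEuclideanLin g)‖

/-- Convolution of two measures on a group (for s-finite measures this is the
pushforward of `μ ⊗ ν` under multiplication). -/
def mconv {G : Type*} [Mul G] [MeasurableSpace G] (μ ν : Measure G) : Measure G :=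
  μ.bind fun x => ν.map fun y => x * y

/-- Convolution power `μ^{*n}`, the law of `g_n ⋯ g_1` for `g_i` i.i.d. of law `μ`. -/
def convPow {G : Type*} [Monoid G] [MeasurableSpace G] (μ : Measure G) : ℕ → Measure G
  | 0 => Measure.dirac 1
  | n + 1 => mconv μ (convPow μ n)

namespace LDprf

/-! ### General measure-theoretic lemmas about `mconv` and `convPow` -/

section General

variable {G : Type*} [Monoid G] [MeasurableSpace G]
  (hmul : Measurable fun p : G × G => p.1 * p.2)

include hmul

lemma measurable_mul_left' (x : G) : Measurable fun y : G => x * y :=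
  hmul.comp (measurable_const.prodMk measurable_id)

lemma measurable_map_mul (ν : Measure G) [SFinite ν] :
    Measurable fun x : G => ν.map fun y => x * y := by
  apply Measure.measurable_of_measurable_coe
  intro s hs
  have h1 : ∀ x : G, (ν.map fun y => x * y) s = ν {y | x * y ∈ s} := by
    intro x
    rw [Measure.map_apply (measurable_mul_left' hmul x) hs]
    rfl
  simp_rw [h1]
  have : ∀ x : G, {y | x * y ∈ s} = Prod.mk x ⁻¹' {p : G × G | p.1 * p.2 ∈ s} := fun x => rfl
  simp_rw [this]
  exact measurable_measure_prodMk_left (hmul hs)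

lemma lintegral_mconv (μ ν : Measure G) [SFinite ν] {f : G → ℝ≥0∞} (hf : Measurable f) :
    ∫⁻ g, f g ∂(mconv μ ν) = ∫⁻ x, ∫⁻ y, f (x * y) ∂ν ∂μ := by
  rw [mconv, Measure.lintegral_bind (measurable_map_mul hmul ν).aemeasurable hf.aemeasurable]
  congr 1
  ext x
  rw [lintegral_map hf (measurable_mul_left' hmul x)]

lemma mconv_prob (μ ν : Measure G) [IsProbabilityMeasure μ] [IsProbabilityMeasure ν] :
    IsProbabilityMeasure (mconv μ ν) := by
  constructor
  have := lintegral_mconv hmul μ ν (f := fun _ => 1) measurable_const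
  simpa using this

lemma convPow_prob (μ : Measure G) [IsProbabilityMeasure μ] (n : ℕ) :
    IsProbabilityMeasure (convPow μ n) := by
  induction n with
  | zero => exact Measure.dirac.isProbabilityMeasure
  | succ n ih => exact mconv_prob hmul μ (convPow μ n)

variable (μ : Measure G) [IsProbabilityMeasure μ]

/-- Splitting lemma for convolution powers. -/
lemma lintegral_convPow_add (a b : ℕ) :
    ∀ f : G → ℝ≥0∞, Measurable f →
    ∫⁻ g, f g ∂(convPow μ (a + b)) =
      ∫⁻ x, ∫⁻ y, f (x * y) ∂(convPow μ b) ∂(convPow μ a) := by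
  induction a with
  | zero =>
    intro f hf
    haveI := convPow_prob hmul μ b
    have : ∀ y, f (1 * y) = f y := fun y => by rw [one_mul]
    rw [zero_add, convPow]
    rw [lintegral_dirac' _ (by
      exact (Measurable.lintegral_prod_right (hf.comp hmul)))]
    simp_rw [this]
  | succ a ih =>
    intro f hf
    haveI := convPow_prob hmul μ b
    haveI := convPow_prob hmul μ (a + b)
    haveI := convPow_prob hmul μ a
    have key : convPow μ (a + 1 + b) = convPow μ ((a + b) + 1) := by
      congr 1; omega
    rw [key, convPow, lintegral_mconv hmul μ (convPow μ (a + b)) hf]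
    have inner : ∀ z : G, ∫⁻ w, f (z * w) ∂(convPow μ (a + b)) =
        ∫⁻ x, ∫⁻ y, f (z * (x * y)) ∂(convPow μ b) ∂(convPow μ a) := by
      intro z
      exact ih (fun w => f (z * w)) (hf.comp (measurable_mul_left' hmul z))
    simp_rw [inner]
    have hF : Measurable fun x : G => ∫⁻ y, f (x * y) ∂(convPow μ b) :=
      Measurable.lintegral_prod_right (hf.comp hmul)
    rw [convPow, lintegral_mconv hmul μ (convPow μ a) hF]
    simp_rw [mul_assoc]

/-- Submultiplicativity of lintegrals of submultiplicative functions. -/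
lemma lintegral_convPow_submul {f : G → ℝ≥0∞} (hf : Measurable f)
    (hsub : ∀ x y, f (x * y) ≤ f x * f y) (a b : ℕ) :
    ∫⁻ g, f g ∂(convPow μ (a + b)) ≤
      (∫⁻ g, f g ∂(convPow μ a)) * ∫⁻ g, f g ∂(convPow μ b) := by
  rw [lintegral_convPow_add hmul μ a b f hf]
  calc ∫⁻ x, ∫⁻ y, f (x * y) ∂(convPow μ b) ∂(convPow μ a)
      ≤ ∫⁻ x, ∫⁻ y, f x * f y ∂(convPow μ b) ∂(convPow μ a) := by
        refine lintegral_mono fun x => lintegral_mono fun y => hsub x y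
    _ = ∫⁻ x, f x * ∫⁻ y, f y ∂(convPow μ b) ∂(convPow μ a) := by
        congr 1; ext x; rw [lintegral_const_mul _ hf]
    _ = (∫⁻ g, f g ∂(convPow μ a)) * ∫⁻ g, f g ∂(convPow μ b) := by
        rw [lintegral_mul_const _ hf]

lemma lintegral_convPow_le_pow {f : G → ℝ≥0∞} (hf : Measurable f)
    (hsub : ∀ x y, f (x * y) ≤ f x * f y) (hone : f 1 = 1) (n k : ℕ) :
    ∫⁻ g, f g ∂(convPow μ (k * n)) ≤ (∫⁻ g, f g ∂(convPow μ n)) ^ k := by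
  induction k with
  | zero =>
    simp [convPow, lintegral_dirac' _ hf, hone]
  | succ k ih =>
    have : (k + 1) * n = n + k * n := by ring
    rw [this]
    calc ∫⁻ g, f g ∂(convPow μ (n + k * n))
        ≤ (∫⁻ g, f g ∂(convPow μ n)) * ∫⁻ g, f g ∂(convPow μ (k * n)) :=
          lintegral_convPow_submul hmul μ hf hsub n (k * n)
      _ ≤ (∫⁻ g, f g ∂(convPow μ n)) * (∫⁻ g, f g ∂(convPow μ n)) ^ k :=
          mul_le_mul_right ih _
      _ = (∫⁻ g, f g ∂(convPow μ n)) ^ (k + 1) := by ring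

lemma lintegral_convPow_one {f : G → ℝ≥0∞} (hf : Measurable f) :
    ∫⁻ g, f g ∂(convPow μ 1) = ∫⁻ g, f g ∂μ := by
  show ∫⁻ g, f g ∂(mconv μ (convPow μ 0)) = _
  rw [show convPow μ 0 = Measure.dirac 1 from rfl]
  rw [lintegral_mconv hmul μ _ hf]
  congr 1
  ext x
  have h := lintegral_dirac' (1 : G) (hf.comp (measurable_mul_left' hmul x))
  simpa using h

end General

/-! ### Elementary real analysis lemmas -/

lemma exp_sub_one_le (s : ℝ) : Real.exp s - 1 ≤ s * Real.exp s := by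
  have h1 : -s + 1 ≤ Real.exp (-s) := Real.add_one_le_exp (-s)
  have h2 : Real.exp (-s) * Real.exp s = 1 := by
    rw [← Real.exp_add]; simp
  nlinarith [Real.exp_pos s, Real.exp_pos (-s)]

lemma slope_bound {x t t₀ : ℝ} (hx : 0 < x) (ht : 0 < t) (htt : t ≤ t₀) :
    |(x ^ t - 1) / t| ≤ |Real.log x| * Real.exp (t₀ * |Real.log x|) := by
  set c := Real.log x with hc
  have hxt : x ^ t = Real.exp (c * t) := by rw [Real.rpow_def_of_pos hx]
  have hub : (x ^ t - 1) / t ≤ c * Real.exp (c * t) := by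
    rw [hxt, div_le_iff₀ ht]
    have := exp_sub_one_le (c * t)
    nlinarith
  have hlb : c ≤ (x ^ t - 1) / t := by
    rw [hxt, le_div_iff₀ ht]
    have := Real.add_one_le_exp (c * t)
    linarith
  have hexp : Real.exp (c * t) ≤ Real.exp (t₀ * |c|) := by
    apply Real.exp_le_exp.2
    calc c * t ≤ |c| * t := by
          apply mul_le_mul_of_nonneg_right (le_abs_self c) ht.le
      _ ≤ |c| * t₀ := by
          apply mul_le_mul_of_nonneg_left htt (abs_nonneg c)
      _ = t₀ * |c| := mul_comm _ _
  have h1 : (1:ℝ) ≤ Real.exp (t₀ * |c|) := by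
    rw [Real.one_le_exp_iff]
    have h0 : 0 < t₀ := lt_of_lt_of_le ht htt
    positivity
  rw [abs_le]
  constructor
  · calc -(|c| * Real.exp (t₀ * |c|)) ≤ -(|c| * 1) := by
          apply neg_le_neg
          apply mul_le_mul_of_nonneg_left h1 (abs_nonneg c)
      _ = -|c| := by ring
      _ ≤ c := neg_abs_le c
      _ ≤ _ := hlb
  · calc (x ^ t - 1) / t ≤ c * Real.exp (c * t) := hub
      _ ≤ |c| * Real.exp (c * t) := by
          apply mul_le_mul_of_nonneg_right (le_abs_self c) (Real.exp_pos _).le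
      _ ≤ |c| * Real.exp (t₀ * |c|) := by
          apply mul_le_mul_of_nonneg_left hexp (abs_nonneg c)

lemma tendsto_slope_rpow {x : ℝ} (hx : 0 < x) {t : ℕ → ℝ}
    (ht : Tendsto t atTop (nhds 0)) (ht0 : ∀ k, t k ≠ 0) :
    Tendsto (fun k => (x ^ t k - 1) / t k) atTop (nhds (Real.log x)) := by
  set c := Real.log x with hc
  have hd : HasDerivAt (fun s : ℝ => Real.exp (c * s)) c 0 := by
    have h1 : HasDerivAt (fun s : ℝ => c * s) c 0 := by
      simpa using (hasDerivAt_id (0:ℝ)).const_mul c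
    have h2 := h1.exp
    simpa using h2
  have hslope := hasDerivAt_iff_tendsto_slope.1 hd
  have ht' : Tendsto t atTop (nhdsWithin 0 {(0:ℝ)}ᶜ) := by
    rw [tendsto_nhdsWithin_iff]
    exact ⟨ht, Eventually.of_forall fun k => ht0 k⟩
  have key := hslope.comp ht'
  refine key.congr fun k => ?_
  rw [Function.comp_apply, slope_def_field, Real.rpow_def_of_pos hx]
  simp [hc]

/-! ### Matrix and `GL` norm facts -/

variable {d : ℕ}

instance : BorelSpace (Matrix (Fin d) (Fin d) ℝ) := Pi.borelSpace

instance : SecondCountableTopology (Matrix (Fin d) (Fin d) ℝ) :=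
  inferInstanceAs (SecondCountableTopology (Fin d → Fin d → ℝ))

lemma opNormR_nonneg (A : Matrix (Fin d) (Fin d) ℝ) : 0 ≤ opNormR A := norm_nonneg _

lemma toEuclideanLin_mul (A B : Matrix (Fin d) (Fin d) ℝ) :
    Matrix.toEuclideanLin (A * B) =
      (Matrix.toEuclideanLin A).comp (Matrix.toEuclideanLin B) := by
  apply LinearMap.ext
  intro v
  simp [Matrix.toEuclideanLin_apply, Matrix.mulVec_mulVec]

lemma opNormR_mul_le (A B : Matrix (Fin d) (Fin d) ℝ) :
    opNormR (A * B) ≤ opNormR A * opNormR B := by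
  unfold opNormR
  have : LinearMap.toContinuousLinearMap (Matrix.toEuclideanLin (A * B)) =
      (LinearMap.toContinuousLinearMap (Matrix.toEuclideanLin A)).comp
        (LinearMap.toContinuousLinearMap (Matrix.toEuclideanLin B)) := by
    apply ContinuousLinearMap.ext
    intro v
    simp [toEuclideanLin_mul]
  rw [this]
  exact ContinuousLinearMap.opNorm_comp_le _ _

lemma opNormR_one (hd : 1 ≤ d) : opNormR (1 : Matrix (Fin d) (Fin d) ℝ) = 1 := by
  haveI : Nonempty (Fin d) := ⟨⟨0, hd⟩⟩
  haveI : Nontrivial (EuclideanSpace ℝ (Fin d)) := by infer_instance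
  unfold opNormR
  have : LinearMap.toContinuousLinearMap (Matrix.toEuclideanLin (1 : Matrix (Fin d) (Fin d) ℝ)) =
      ContinuousLinearMap.id ℝ (EuclideanSpace ℝ (Fin d)) := by
    apply ContinuousLinearMap.ext
    intro v
    simp [Matrix.toEuclideanLin_apply, Matrix.one_mulVec]
  rw [this]
  exact ContinuousLinearMap.norm_id

lemma continuous_opNormR : Continuous fun A : Matrix (Fin d) (Fin d) ℝ => opNormR A := by
  have h : Continuous fun A : Matrix (Fin d) (Fin d) ℝ =>
      LinearMap.toContinuousLinearMap (Matrix.toEuclideanLin A) := by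
    have : (fun A : Matrix (Fin d) (Fin d) ℝ =>
        LinearMap.toContinuousLinearMap (Matrix.toEuclideanLin A)) =
        ((LinearMap.toContinuousLinearMap : _ ≃ₗ[ℝ] _).toLinearMap.comp
          (Matrix.toEuclideanLin (𝕜 := ℝ) (m := Fin d) (n := Fin d)).toLinearMap : _ →ₗ[ℝ] _) :=
      rfl
    rw [this]
    exact LinearMap.continuous_of_finiteDimensional _
  exact continuous_norm.comp h

lemma measurable_opNormR : Measurable fun A : Matrix (Fin d) (Fin d) ℝ => opNormR A :=
  continuous_opNormR.measurable

lemma measurable_val : Measurable fun g : GL (Fin d) ℝ => (g.val : Matrix (Fin d) (Fin d) ℝ) :=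
  comap_measurable _

lemma measurable_to_units {α : Type*} [MeasurableSpace α] {f : α → GL (Fin d) ℝ}
    (h : Measurable fun x => ((f x : GL (Fin d) ℝ) : Matrix (Fin d) (Fin d) ℝ)) :
    Measurable f := by
  rintro s ⟨t, ht, rfl⟩
  exact h ht

lemma measurable_matrix_inv :
    Measurable fun A : Matrix (Fin d) (Fin d) ℝ => A⁻¹ := by
  have : (fun A : Matrix (Fin d) (Fin d) ℝ => A⁻¹) =
      fun A => Ring.inverse A.det • A.adjugate := by
    funext A; exact Matrix.inv_def A
  rw [this]
  have hdet : Measurable fun A : Matrix (Fin d) (Fin d) ℝ => Ring.inverse A.det := by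
    simp_rw [Ring.inverse_eq_inv']
    exact measurable_inv.comp (Continuous.matrix_det continuous_id).measurable
  have hadj : Measurable fun A : Matrix (Fin d) (Fin d) ℝ => A.adjugate :=
    (Continuous.matrix_adjugate continuous_id).measurable
  exact hdet.smul hadj

lemma measurable_inv_val :
    Measurable fun g : GL (Fin d) ℝ => ((g⁻¹ : GL (Fin d) ℝ) : Matrix (Fin d) (Fin d) ℝ) := by
  have : (fun g : GL (Fin d) ℝ => ((g⁻¹ : GL (Fin d) ℝ) : Matrix (Fin d) (Fin d) ℝ)) =
      fun g : GL (Fin d) ℝ => ((g : Matrix (Fin d) (Fin d) ℝ))⁻¹ := by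
    funext g; exact Matrix.coe_units_inv g
  rw [this]
  exact measurable_matrix_inv.comp measurable_val

lemma measurable_mul_G : Measurable fun p : GL (Fin d) ℝ × GL (Fin d) ℝ => p.1 * p.2 := by
  apply measurable_to_units
  have : (fun p : GL (Fin d) ℝ × GL (Fin d) ℝ =>
      ((p.1 * p.2 : GL (Fin d) ℝ) : Matrix (Fin d) (Fin d) ℝ)) =
      fun p => (p.1 : Matrix (Fin d) (Fin d) ℝ) * (p.2 : Matrix (Fin d) (Fin d) ℝ) := rfl
  rw [this]
  have h1 : Measurable fun p : GL (Fin d) ℝ × GL (Fin d) ℝ => (p.1 : Matrix (Fin d) (Fin d) ℝ) :=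
    measurable_val.comp measurable_fst
  have h2 : Measurable fun p : GL (Fin d) ℝ × GL (Fin d) ℝ => (p.2 : Matrix (Fin d) (Fin d) ℝ) :=
    measurable_val.comp measurable_snd
  have hc : Continuous fun q : Matrix (Fin d) (Fin d) ℝ × Matrix (Fin d) (Fin d) ℝ =>
      q.1 * q.2 := Continuous.matrix_mul continuous_fst continuous_snd
  exact hc.measurable.comp (h1.prodMk h2)

/-- Max of the norms of `g` and `g⁻¹`. -/
def MxF (g : GL (Fin d) ℝ) : ℝ := max (opNormR g.val) (opNormR (g⁻¹).val)

lemma measurable_aG : Measurable fun g : GL (Fin d) ℝ => opNormR g.val :=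
  measurable_opNormR.comp measurable_val

lemma measurable_bG : Measurable fun g : GL (Fin d) ℝ => opNormR (g⁻¹).val :=
  measurable_opNormR.comp measurable_inv_val

lemma measurable_MxF : Measurable fun g : GL (Fin d) ℝ => MxF g :=
  measurable_aG.max measurable_bG

lemma aG_submul (x y : GL (Fin d) ℝ) :
    opNormR (x * y).val ≤ opNormR x.val * opNormR y.val :=
  opNormR_mul_le _ _

lemma one_le_aG_mul (hd : 1 ≤ d) (g : GL (Fin d) ℝ) :
    1 ≤ opNormR g.val * opNormR (g⁻¹).val := by
  have h1 : (g.val : Matrix (Fin d) (Fin d) ℝ) * (g⁻¹).val = 1 := by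
    rw [← Units.val_mul, mul_inv_cancel]
    rfl
  calc (1:ℝ) = opNormR (1 : Matrix (Fin d) (Fin d) ℝ) := (opNormR_one hd).symm
    _ = opNormR ((g.val : Matrix (Fin d) (Fin d) ℝ) * (g⁻¹).val) := by rw [h1]
    _ ≤ opNormR g.val * opNormR (g⁻¹).val := opNormR_mul_le _ _

lemma aG_pos (hd : 1 ≤ d) (g : GL (Fin d) ℝ) : 0 < opNormR g.val := by
  have h := one_le_aG_mul hd g
  have h1 := opNormR_nonneg (g.val : Matrix (Fin d) (Fin d) ℝ)
  have h2 := opNormR_nonneg ((g⁻¹ : GL (Fin d) ℝ).val : Matrix (Fin d) (Fin d) ℝ)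
  nlinarith

lemma bG_pos (hd : 1 ≤ d) (g : GL (Fin d) ℝ) : 0 < opNormR (g⁻¹).val := by
  have h := one_le_aG_mul hd g
  have h1 := opNormR_nonneg (g.val : Matrix (Fin d) (Fin d) ℝ)
  have h2 := opNormR_nonneg ((g⁻¹ : GL (Fin d) ℝ).val : Matrix (Fin d) (Fin d) ℝ)
  nlinarith

lemma one_le_MxF (hd : 1 ≤ d) (g : GL (Fin d) ℝ) : 1 ≤ MxF g := by
  have h := one_le_aG_mul hd g
  have h1 := le_max_left (opNormR g.val) (opNormR (g⁻¹).val)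
  have h2 := le_max_right (opNormR g.val) (opNormR (g⁻¹).val)
  have h3 := opNormR_nonneg (g.val : Matrix (Fin d) (Fin d) ℝ)
  have h4 := opNormR_nonneg ((g⁻¹ : GL (Fin d) ℝ).val : Matrix (Fin d) (Fin d) ℝ)
  unfold MxF
  nlinarith

lemma MxF_pos (hd : 1 ≤ d) (g : GL (Fin d) ℝ) : 0 < MxF g :=
  lt_of_lt_of_le one_pos (one_le_MxF hd g)

lemma abs_log_aG_le (hd : 1 ≤ d) (g : GL (Fin d) ℝ) :
    |Real.log (opNormR g.val)| ≤ Real.log (MxF g) := by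
  have hap := aG_pos hd g
  have hbp := bG_pos hd g
  have hM := MxF_pos hd g
  rw [abs_le]
  constructor
  · have hinv : (opNormR g.val)⁻¹ ≤ opNormR (g⁻¹).val := by
      have h := one_le_aG_mul hd g
      rw [inv_le_iff_one_le_mul₀ hap]
      nlinarith
    rw [neg_le, ← Real.log_inv]
    calc Real.log (opNormR g.val)⁻¹ ≤ Real.log (opNormR (g⁻¹).val) :=
          Real.log_le_log (by positivity) hinv
      _ ≤ Real.log (MxF g) := Real.log_le_log hbp (le_max_right _ _)
  · exact Real.log_le_log hap (le_max_left _ _)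

lemma MxF_submul (x y : GL (Fin d) ℝ) : MxF (x * y) ≤ MxF x * MxF y := by
  have hax := opNormR_nonneg (x.val : Matrix (Fin d) (Fin d) ℝ)
  have hay := opNormR_nonneg (y.val : Matrix (Fin d) (Fin d) ℝ)
  have hbx := opNormR_nonneg ((x⁻¹ : GL (Fin d) ℝ).val : Matrix (Fin d) (Fin d) ℝ)
  have hby := opNormR_nonneg ((y⁻¹ : GL (Fin d) ℝ).val : Matrix (Fin d) (Fin d) ℝ)
  have h1 : opNormR (x * y).val ≤ opNormR x.val * opNormR y.val := aG_submul x y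
  have h2 : opNormR ((x * y)⁻¹).val ≤ opNormR (y⁻¹).val * opNormR (x⁻¹).val := by
    have : ((x * y)⁻¹ : GL (Fin d) ℝ) = y⁻¹ * x⁻¹ := mul_inv_rev x y
    rw [this]
    exact aG_submul y⁻¹ x⁻¹
  unfold MxF
  rw [max_le_iff]
  constructor
  · calc opNormR (x * y).val ≤ opNormR x.val * opNormR y.val := h1
      _ ≤ _ := by
          apply mul_le_mul (le_max_left _ _) (le_max_left _ _) hay
          exact le_trans hax (le_max_left _ _)
  · calc opNormR ((x * y)⁻¹).val ≤ opNormR (y⁻¹).val * opNormR (x⁻¹).val := h2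
      _ ≤ MxF x * MxF y := by
          rw [mul_comm]
          apply mul_le_mul (le_max_right _ _) (le_max_right _ _) hby
          exact le_trans hbx (le_max_right _ _)

lemma aG_one (hd : 1 ≤ d) : opNormR ((1 : GL (Fin d) ℝ)).val = 1 := by
  have : ((1 : GL (Fin d) ℝ)).val = (1 : Matrix (Fin d) (Fin d) ℝ) := rfl
  rw [this, opNormR_one hd]

lemma MxF_one (hd : 1 ≤ d) : MxF (1 : GL (Fin d) ℝ) = 1 := by
  unfold MxF
  rw [inv_one, aG_one hd]
  simp

end LDprf

open LDprf

set_option maxHeartbeats 2000000 in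
/-- **Large deviation estimate for the norm of a random matrix product**
(Theorem A.1 of the paper). -/
theorem large_deviation_top_lyapunov
    (d : ℕ) (hd : 1 ≤ d)
    (μ : Measure (GL (Fin d) ℝ)) [IsProbabilityMeasure μ]
    (hmom : ∃ β > (0 : ℝ),
      Integrable (fun g : GL (Fin d) ℝ => (max (opNormR g.val) (opNormR (g⁻¹).val)) ^ β) μ)
    (lambda1 : ℝ)
    (hl1 : Tendsto (fun m : ℕ => (m : ℝ)⁻¹ * ∫ g, Real.log (opNormR g.val) ∂(convPow μ m))
      atTop (nhds lambda1)) :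
    ∀ ω > (0 : ℝ), ∃ κ > (0 : ℝ), ∃ M : ℕ, ∀ m ≥ M,
      convPow μ m { g : GL (Fin d) ℝ | (m : ℝ) * (lambda1 + ω) < Real.log (opNormR g.val) }
        ≤ ENNReal.ofReal (Real.exp (-κ * m)) := by
  intro ω hω
  obtain ⟨β, hβ, hint⟩ := hmom
  haveI hPm : ∀ m : ℕ, IsProbabilityMeasure (convPow μ m) :=
    convPow_prob measurable_mul_G μ
  -- Basic positivity facts
  have haG_pos : ∀ g : GL (Fin d) ℝ, 0 < opNormR g.val := aG_pos hd
  have haG_nn : ∀ g : GL (Fin d) ℝ, 0 ≤ opNormR g.val := fun g => (haG_pos g).le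
  have hMx_pos : ∀ g : GL (Fin d) ℝ, 0 < MxF g := MxF_pos hd
  have hMx1 : ∀ g : GL (Fin d) ℝ, 1 ≤ MxF g := one_le_MxF hd
  have hMβ_nn : ∀ g : GL (Fin d) ℝ, 0 ≤ MxF g ^ β := fun g => Real.rpow_nonneg (hMx_pos g).le β
  -- The exponential moment in `ℝ≥0∞` form
  set fM : GL (Fin d) ℝ → ℝ≥0∞ := fun g => ENNReal.ofReal (MxF g ^ β) with hfM_def
  have hfM_meas : Measurable fM :=
    ENNReal.measurable_ofReal.comp ((Real.continuous_rpow_const hβ.le).measurable.comp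
      measurable_MxF)
  have hfM_sub : ∀ x y, fM (x * y) ≤ fM x * fM y := by
    intro x y
    rw [hfM_def]
    simp only
    rw [← ENNReal.ofReal_mul (hMβ_nn x)]
    apply ENNReal.ofReal_le_ofReal
    calc MxF (x * y) ^ β ≤ (MxF x * MxF y) ^ β :=
          Real.rpow_le_rpow (hMx_pos _).le (MxF_submul x y) hβ.le
      _ = MxF x ^ β * MxF y ^ β := Real.mul_rpow (hMx_pos x).le (hMx_pos y).le
  have hfM_one : fM 1 = 1 := by
    rw [hfM_def]; simp only [MxF_one hd, Real.one_rpow, ENNReal.ofReal_one]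
  have hint' : Integrable (fun g => MxF g ^ β) μ := hint
  have hintM_nn : 0 ≤ᵐ[μ] fun g => MxF g ^ β := ae_of_all _ hMβ_nn
  set EM : ℝ≥0∞ := ∫⁻ g, fM g ∂μ with hEM_def
  have hEM_eq : EM = ENNReal.ofReal (∫ g, MxF g ^ β ∂μ) :=
    (ofReal_integral_eq_lintegral_ofReal hint' hintM_nn).symm
  have hEM_lt : EM < ⊤ := by rw [hEM_eq]; exact ENNReal.ofReal_lt_top
  have hfM_pow : ∀ N : ℕ, ∫⁻ g, fM g ∂(convPow μ N) ≤ EM ^ N := by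
    intro N
    have h := lintegral_convPow_le_pow measurable_mul_G μ hfM_meas hfM_sub hfM_one 1 N
    rw [mul_one, lintegral_convPow_one measurable_mul_G μ hfM_meas] at h
    exact h
  -- Step 1 : choose a block length n
  have h8 : lambda1 < lambda1 + ω / 8 := by linarith
  obtain ⟨n, hn1, hnge⟩ := ((hl1.eventually_lt_const h8).and (eventually_ge_atTop 1)).exists
  have hnpos : (0:ℝ) < n := by exact_mod_cast Nat.lt_of_lt_of_le Nat.zero_lt_one hnge
  have hn0 : 0 < n := hnge
  set ν : Measure (GL (Fin d) ℝ) := convPow μ n with hν_def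
  haveI : IsProbabilityMeasure ν := hPm n
  set A : ℝ := ∫ g, Real.log (opNormR g.val) ∂ν with hA_def
  have hA : A < n * (lambda1 + ω / 8) := by
    have := (inv_mul_lt_iff₀ hnpos).1 hn1
    linarith
  -- Step 2 : dominated convergence to find a small exponent t
  set tk : ℕ → ℝ := fun k => (β / 2) / ((k : ℝ) + 1) with htk_def
  have htk_pos : ∀ k, 0 < tk k := by
    intro k
    rw [htk_def]
    have h1 : (0:ℝ) < (k:ℝ) + 1 := by positivity
    have h2 : (0:ℝ) < β / 2 := by linarith
    exact div_pos h2 h1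
  have htk_le : ∀ k, tk k ≤ β / 2 := by
    intro k
    rw [htk_def]
    apply div_le_self (by positivity)
    have : (0:ℝ) ≤ (k:ℝ) := Nat.cast_nonneg k
    linarith
  have htk_tendsto : Tendsto tk atTop (nhds 0) := by
    have h1 : Tendsto (fun k : ℕ => ((k:ℝ) + 1)) atTop atTop :=
      tendsto_atTop_add_const_right _ 1 tendsto_natCast_atTop_atTop
    have h2 : Tendsto (fun k : ℕ => ((k:ℝ) + 1)⁻¹) atTop (nhds 0) := h1.inv_tendsto_atTop
    have h3 := h2.const_mul (β / 2)
    simp only [mul_zero] at h3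
    refine h3.congr fun k => ?_
    rw [htk_def]
    ring
  -- the dominating function
  set Db : GL (Fin d) ℝ → ℝ := fun g => (2 / β) * MxF g ^ β with hDb_def
  have h2β : (0:ℝ) ≤ 2 / β := div_nonneg (by norm_num) hβ.le
  have hDb_nn : ∀ g, 0 ≤ Db g := fun g => by
    rw [hDb_def]; exact mul_nonneg h2β (hMβ_nn g)
  have hDb_meas : Measurable Db :=
    ((Real.continuous_rpow_const hβ.le).measurable.comp measurable_MxF).const_mul _
  have hDb_int : Integrable Db ν := by
    refine ⟨hDb_meas.aestronglyMeasurable, ?_⟩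
    rw [hasFiniteIntegral_iff_ofReal (ae_of_all _ hDb_nn)]
    have heq : ∀ g, ENNReal.ofReal (Db g) = ENNReal.ofReal (2 / β) * fM g := by
      intro g
      rw [hDb_def, hfM_def]
      simp only
      rw [← ENNReal.ofReal_mul h2β]
    calc ∫⁻ g, ENNReal.ofReal (Db g) ∂ν = ∫⁻ g, ENNReal.ofReal (2 / β) * fM g ∂ν := by
          simp_rw [heq]
      _ = ENNReal.ofReal (2 / β) * ∫⁻ g, fM g ∂ν := lintegral_const_mul _ hfM_meas
      _ ≤ ENNReal.ofReal (2 / β) * EM ^ n := mul_le_mul_right (hfM_pow n) _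
      _ < ⊤ := ENNReal.mul_lt_top ENNReal.ofReal_lt_top (ENNReal.pow_lt_top hEM_lt)
  -- pointwise bound on slopes
  have hslope_bd : ∀ t : ℝ, 0 < t → t ≤ β / 2 → ∀ g : GL (Fin d) ℝ,
      |(opNormR g.val ^ t - 1) / t| ≤ Db g := by
    intro t ht htle g
    have h1 := slope_bound (haG_pos g) ht htle
    have hlogM_nn : 0 ≤ Real.log (MxF g) := Real.log_nonneg (hMx1 g)
    have habs := abs_log_aG_le hd g
    have h2 : |Real.log (opNormR g.val)| * Real.exp ((β/2) * |Real.log (opNormR g.val)|) ≤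
        Real.log (MxF g) * Real.exp ((β/2) * Real.log (MxF g)) := by
      apply mul_le_mul habs _ (Real.exp_pos _).le hlogM_nn
      exact Real.exp_le_exp.2 (mul_le_mul_of_nonneg_left habs (by linarith))
    have h3 : Real.exp ((β/2) * Real.log (MxF g)) = MxF g ^ (β/2) := by
      rw [Real.rpow_def_of_pos (hMx_pos g), mul_comm]
    have h4 : Real.log (MxF g) ≤ (2 / β) * MxF g ^ (β/2) := by
      have h5 : Real.log (MxF g ^ (β/2)) ≤ MxF g ^ (β/2) - 1 :=
        Real.log_le_sub_one_of_pos (Real.rpow_pos_of_pos (hMx_pos g) _)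
      rw [Real.log_rpow (hMx_pos g)] at h5
      have h6 : (0:ℝ) < β / 2 := by linarith
      have h7 : Real.log (MxF g) ≤ (MxF g ^ (β/2) - 1) / (β/2) := by
        rw [le_div_iff₀ h6]
        nlinarith
      calc Real.log (MxF g) ≤ (MxF g ^ (β/2) - 1) / (β/2) := h7
        _ ≤ MxF g ^ (β/2) / (β/2) := by
            gcongr
            linarith
        _ = (2 / β) * MxF g ^ (β/2) := by
            field_simp
    have h9 : MxF g ^ (β/2) * MxF g ^ (β/2) = MxF g ^ β := by
      rw [← Real.rpow_add (hMx_pos g)]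
      norm_num
    have h10 : 0 ≤ MxF g ^ (β/2) := (Real.rpow_pos_of_pos (hMx_pos g) _).le
    calc |(opNormR g.val ^ t - 1) / t|
        ≤ |Real.log (opNormR g.val)| * Real.exp ((β/2) * |Real.log (opNormR g.val)|) := h1
      _ ≤ Real.log (MxF g) * Real.exp ((β/2) * Real.log (MxF g)) := h2
      _ = Real.log (MxF g) * MxF g ^ (β/2) := by rw [h3]
      _ ≤ ((2 / β) * MxF g ^ (β/2)) * MxF g ^ (β/2) :=
          mul_le_mul_of_nonneg_right h4 h10
      _ = (2 / β) * MxF g ^ β := by rw [mul_assoc, h9]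
      _ = Db g := by rw [hDb_def]
  -- the approximating integrands
  set Fk : ℕ → GL (Fin d) ℝ → ℝ := fun k g => (opNormR g.val ^ tk k - 1) / tk k with hFk_def
  have hFk_meas : ∀ k, Measurable (Fk k) := by
    intro k
    apply Measurable.div_const
    exact ((Real.continuous_rpow_const (htk_pos k).le).measurable.comp measurable_aG).sub
      measurable_const
  have hFk_bd : ∀ k, ∀ g, ‖Fk k g‖ ≤ Db g := by
    intro k g
    rw [Real.norm_eq_abs, hFk_def]
    exact hslope_bd (tk k) (htk_pos k) (htk_le k) g
  have hDCT : Tendsto (fun k => ∫ g, Fk k g ∂ν) atTop (nhds A) := by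
    rw [hA_def]
    apply tendsto_integral_of_dominated_convergence Db
      (fun k => (hFk_meas k).aestronglyMeasurable) hDb_int
      (fun k => ae_of_all _ (hFk_bd k))
    apply ae_of_all
    intro g
    exact tendsto_slope_rpow (haG_pos g) htk_tendsto (fun k => (htk_pos k).ne')
  have hAlt : A < A + n * (ω / 8) := by
    have : (0:ℝ) < n * (ω / 8) := mul_pos hnpos (by linarith)
    linarith
  obtain ⟨k, hk⟩ := (hDCT.eventually_lt_const hAlt).exists
  set t : ℝ := tk k with ht_def
  have ht_pos : 0 < t := htk_pos k
  have ht_le : t ≤ β / 2 := htk_le k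
  have hFk_int : Integrable (Fk k) ν :=
    hDb_int.mono' (hFk_meas k).aestronglyMeasurable (ae_of_all _ (hFk_bd k))
  -- the moment bound at scale n
  have hpt : ∀ g : GL (Fin d) ℝ, opNormR g.val ^ t = 1 + t * Fk k g := by
    intro g
    rw [hFk_def]
    have h := (htk_pos k).ne'
    rw [ht_def]
    field_simp
    ring
  have hat_int : Integrable (fun g => opNormR g.val ^ t) ν := by
    have : Integrable (fun g => 1 + t * Fk k g) ν :=
      (integrable_const 1).add (hFk_int.const_mul t)
    exact this.congr (ae_of_all _ fun g => (hpt g).symm)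
  have hat_nn : ∀ g : GL (Fin d) ℝ, 0 ≤ opNormR g.val ^ t :=
    fun g => Real.rpow_nonneg (haG_nn g) t
  have hIntFk : ∫ g, Fk k g ∂ν ≤ n * (lambda1 + ω / 4) := by
    have h1 : ∫ g, Fk k g ∂ν < A + n * (ω / 8) := hk
    nlinarith
  have hat_eq : ∫ g, opNormR g.val ^ t ∂ν = 1 + t * ∫ g, Fk k g ∂ν := by
    calc ∫ g, opNormR g.val ^ t ∂ν = ∫ g, (1 + t * Fk k g) ∂ν := by
          apply integral_congr_ae (ae_of_all _ hpt)
      _ = ∫ (_ : GL (Fin d) ℝ), (1:ℝ) ∂ν + ∫ g, t * Fk k g ∂ν :=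
          integral_add (integrable_const 1) (hFk_int.const_mul t)
      _ = 1 + t * ∫ g, Fk k g ∂ν := by
          rw [integral_const, integral_const_mul]
          simp
  have hat_le : ∫ g, opNormR g.val ^ t ∂ν ≤ Real.exp (t * (n * (lambda1 + ω / 4))) := by
    have h1 : ∫ g, opNormR g.val ^ t ∂ν ≤ 1 + t * (n * (lambda1 + ω / 4)) := by
      rw [hat_eq]
      have := mul_le_mul_of_nonneg_left hIntFk ht_pos.le
      linarith
    calc ∫ g, opNormR g.val ^ t ∂ν ≤ 1 + t * (n * (lambda1 + ω / 4)) := h1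
      _ ≤ Real.exp (t * (n * (lambda1 + ω / 4))) := by
          have := Real.add_one_le_exp (t * (n * (lambda1 + ω / 4)))
          linarith
  -- the `ℝ≥0∞` Chernoff weight
  set fT : GL (Fin d) ℝ → ℝ≥0∞ := fun g => ENNReal.ofReal (opNormR g.val ^ t) with hfT_def
  have hfT_meas : Measurable fT :=
    ENNReal.measurable_ofReal.comp ((Real.continuous_rpow_const ht_pos.le).measurable.comp
      measurable_aG)
  have hfT_sub : ∀ x y, fT (x * y) ≤ fT x * fT y := by
    intro x y
    rw [hfT_def]
    simp only
    rw [← ENNReal.ofReal_mul (hat_nn x)]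
    apply ENNReal.ofReal_le_ofReal
    calc opNormR (x * y).val ^ t ≤ (opNormR x.val * opNormR y.val) ^ t :=
          Real.rpow_le_rpow (haG_nn _) (aG_submul x y) ht_pos.le
      _ = opNormR x.val ^ t * opNormR y.val ^ t := Real.mul_rpow (haG_nn x) (haG_nn y)
  have hfT_one : fT 1 = 1 := by
    rw [hfT_def]; simp only [aG_one hd, Real.one_rpow, ENNReal.ofReal_one]
  set e1 : ℝ := Real.exp (t * (n * (lambda1 + ω / 4))) with he1_def
  have hJn : ∫⁻ g, fT g ∂ν ≤ ENNReal.ofReal e1 := by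
    rw [hfT_def]
    rw [← ofReal_integral_eq_lintegral_ofReal hat_int (ae_of_all _ hat_nn)]
    exact ENNReal.ofReal_le_ofReal hat_le
  -- bound for one step
  set b' : ℝ := 1 + ∫ g, MxF g ^ β ∂μ with hb'_def
  have hIμ_nn : 0 ≤ ∫ g, MxF g ^ β ∂μ := integral_nonneg hMβ_nn
  have hb'1 : 1 ≤ b' := by rw [hb'_def]; linarith
  have hb'_pos : 0 < b' := lt_of_lt_of_le one_pos hb'1
  have hB : ∫⁻ g, fT g ∂μ ≤ ENNReal.ofReal b' := by
    have hptB : ∀ g : GL (Fin d) ℝ, opNormR g.val ^ t ≤ 1 + MxF g ^ β := by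
      intro g
      rcases le_or_gt (opNormR g.val) 1 with hle | hgt
      · have : opNormR g.val ^ t ≤ 1 := Real.rpow_le_one (haG_nn g) hle ht_pos.le
        linarith [hMβ_nn g]
      · have h1 : opNormR g.val ^ t ≤ opNormR g.val ^ β := by
          apply Real.rpow_le_rpow_of_exponent_le hgt.le
          linarith
        have h2 : opNormR g.val ^ β ≤ MxF g ^ β :=
          Real.rpow_le_rpow (haG_nn g) (le_max_left _ _) hβ.le
        linarith
    calc ∫⁻ g, fT g ∂μ ≤ ∫⁻ g, ENNReal.ofReal (1 + MxF g ^ β) ∂μ := by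
          apply lintegral_mono
          intro g
          rw [hfT_def]
          exact ENNReal.ofReal_le_ofReal (hptB g)
      _ = ∫⁻ g, (1 + fM g) ∂μ := by
          apply lintegral_congr
          intro g
          rw [ENNReal.ofReal_add (by norm_num) (hMβ_nn g), ENNReal.ofReal_one, hfM_def]
      _ = 1 + EM := by
          rw [lintegral_add_left measurable_const]
          simp [hEM_def]
      _ = ENNReal.ofReal b' := by
          rw [hb'_def, ENNReal.ofReal_add (by norm_num) hIμ_nn, ENNReal.ofReal_one, hEM_eq]
  -- choice of κ and M
  set C0 : ℝ := t * n * |lambda1 + ω / 4| + n * Real.log b' with hC0_def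
  have hlogb'_nn : 0 ≤ Real.log b' := Real.log_nonneg hb'1
  have hC0_nn : 0 ≤ C0 := by
    rw [hC0_def]
    have h1 : (0:ℝ) ≤ t * n * |lambda1 + ω / 4| :=
      mul_nonneg (mul_nonneg ht_pos.le hnpos.le) (abs_nonneg _)
    nlinarith
  refine ⟨t * (ω / 2), mul_pos ht_pos (by linarith), ⌈C0 / (t * (ω / 4))⌉₊, ?_⟩
  intro m hm
  have hMce : C0 ≤ t * (ω / 4) * m := by
    have h1 : C0 / (t * (ω / 4)) ≤ m := by
      apply le_trans (Nat.le_ceil _)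
      exact_mod_cast hm
    have h2 : (0:ℝ) < t * (ω / 4) := mul_pos ht_pos (by linarith)
    rw [div_le_iff₀ h2] at h1
    linarith
  -- decomposition m = n*q + r
  set q : ℕ := m / n with hq_def
  set r : ℕ := m % n with hr_def
  have hm_eq : n * q + r = m := Nat.div_add_mod m n
  have hr_lt : r < n := Nat.mod_lt _ hn0
  -- Chernoff bound
  set e2 : ℝ := Real.exp (t * (m * (lambda1 + ω))) with he2_def
  set c : ℝ≥0∞ := ENNReal.ofReal e2 with hc_def
  have hc_ne0 : c ≠ 0 := by
    rw [hc_def]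
    exact (ENNReal.ofReal_pos.2 (Real.exp_pos _)).ne'
  have hc_netop : c ≠ ⊤ := by rw [hc_def]; exact ENNReal.ofReal_ne_top
  set S : Set (GL (Fin d) ℝ) :=
    { g : GL (Fin d) ℝ | (m : ℝ) * (lambda1 + ω) < Real.log (opNormR g.val) } with hS_def
  have hS_sub : S ⊆ { g : GL (Fin d) ℝ | c ≤ fT g } := by
    intro g hg
    rw [hS_def] at hg
    have hg' : (m : ℝ) * (lambda1 + ω) < Real.log (opNormR g.val) := hg
    have h1 : Real.exp ((m : ℝ) * (lambda1 + ω)) ≤ opNormR g.val := by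
      calc Real.exp ((m : ℝ) * (lambda1 + ω)) ≤ Real.exp (Real.log (opNormR g.val)) :=
            Real.exp_le_exp.2 hg'.le
        _ = opNormR g.val := Real.exp_log (haG_pos g)
    have h2 : e2 = Real.exp ((m : ℝ) * (lambda1 + ω)) ^ t := by
      rw [he2_def, Real.rpow_def_of_pos (Real.exp_pos _), Real.log_exp, mul_comm]
    have h3 : e2 ≤ opNormR g.val ^ t := by
      rw [h2]
      exact Real.rpow_le_rpow (Real.exp_pos _).le h1 ht_pos.le
    show c ≤ fT g
    rw [hc_def, hfT_def]
    exact ENNReal.ofReal_le_ofReal h3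
  have hcher : convPow μ m S ≤ (∫⁻ g, fT g ∂(convPow μ m)) / c := by
    rw [ENNReal.le_div_iff_mul_le (Or.inl hc_ne0) (Or.inl hc_netop), mul_comm]
    calc c * convPow μ m S ≤ c * convPow μ m { g | c ≤ fT g } :=
          mul_le_mul_right (measure_mono hS_sub) c
      _ ≤ ∫⁻ g, fT g ∂(convPow μ m) := mul_meas_ge_le_lintegral₀ hfT_meas.aemeasurable c
  -- block bound on the lintegral
  have hblock : ∫⁻ g, fT g ∂(convPow μ m) ≤ (ENNReal.ofReal e1) ^ q * (ENNReal.ofReal b') ^ r := by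
    have h0 : ∫⁻ g, fT g ∂(convPow μ m) ≤
        (∫⁻ g, fT g ∂(convPow μ (n * q))) * ∫⁻ g, fT g ∂(convPow μ r) := by
      conv_lhs => rw [← hm_eq]
      exact lintegral_convPow_submul measurable_mul_G μ hfT_meas hfT_sub (n * q) r
    have h1 : ∫⁻ g, fT g ∂(convPow μ (n * q)) ≤ (ENNReal.ofReal e1) ^ q := by
      have h2 : ∫⁻ g, fT g ∂(convPow μ (q * n)) ≤ (∫⁻ g, fT g ∂(convPow μ n)) ^ q :=
        lintegral_convPow_le_pow measurable_mul_G μ hfT_meas hfT_sub hfT_one n q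
      rw [mul_comm n q]
      exact le_trans h2 (pow_le_pow_left' hJn q)
    have h3 : ∫⁻ g, fT g ∂(convPow μ r) ≤ (ENNReal.ofReal b') ^ r := by
      have h4 := lintegral_convPow_le_pow measurable_mul_G μ hfT_meas hfT_sub hfT_one 1 r
      rw [mul_one, lintegral_convPow_one measurable_mul_G μ hfT_meas] at h4
      exact le_trans h4 (pow_le_pow_left' hB r)
    calc ∫⁻ g, fT g ∂(convPow μ m)
        ≤ (∫⁻ g, fT g ∂(convPow μ (n * q))) * ∫⁻ g, fT g ∂(convPow μ r) := h0
      _ ≤ (ENNReal.ofReal e1) ^ q * (ENNReal.ofReal b') ^ r := mul_le_mul' h1 h3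
  -- the final real-number estimate
  have hreal : e1 ^ q * b' ^ r / e2 ≤ Real.exp (-(t * (ω / 2)) * m) := by
    rw [div_le_iff₀ (Real.exp_pos _)]
    have hq1 : e1 ^ q = Real.exp ((q : ℝ) * (t * (n * (lambda1 + ω / 4)))) := by
      rw [he1_def, ← Real.exp_nat_mul]
    have hq2 : b' ^ r ≤ b' ^ n := pow_le_pow_right₀ hb'1 hr_lt.le
    have hq3 : b' ^ n = Real.exp ((n : ℝ) * Real.log b') := by
      rw [Real.exp_nat_mul, Real.exp_log hb'_pos]
    have hq4 : Real.exp (-(t * (ω / 2)) * m) * e2 =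
        Real.exp (-(t * (ω / 2)) * m + t * (m * (lambda1 + ω))) := by
      rw [he2_def, ← Real.exp_add]
    have hq5 : e1 ^ q * b' ^ r ≤
        Real.exp ((q : ℝ) * (t * (n * (lambda1 + ω / 4))) + (n : ℝ) * Real.log b') := by
      rw [Real.exp_add, hq1]
      apply mul_le_mul_of_nonneg_left _ (Real.exp_pos _).le
      rw [← hq3]
      exact hq2
    rw [hq4]
    apply le_trans hq5
    apply Real.exp_le_exp.2
    -- arithmetic of exponents
    have hmr : (n : ℝ) * (q : ℝ) + (r : ℝ) = (m : ℝ) := by exact_mod_cast hm_eq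
    have hrn : (r : ℝ) ≤ (n : ℝ) := by exact_mod_cast hr_lt.le
    have hrnn : (0:ℝ) ≤ (r : ℝ) := Nat.cast_nonneg r
    have habs1 : -(lambda1 + ω / 4) ≤ |lambda1 + ω / 4| := neg_le_abs _
    have habs2 : lambda1 + ω / 4 ≤ |lambda1 + ω / 4| := le_abs_self _
    have hX : t * (r : ℝ) * |lambda1 + ω / 4| ≤ t * (n : ℝ) * |lambda1 + ω / 4| := by
      apply mul_le_mul_of_nonneg_right _ (abs_nonneg _)
      exact mul_le_mul_of_nonneg_left hrn ht_pos.le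
    have hqn : (q : ℝ) * (t * ((n:ℝ) * (lambda1 + ω / 4))) =
        t * ((m : ℝ) - (r : ℝ)) * (lambda1 + ω / 4) := by
      have hnq : (n : ℝ) * (q : ℝ) = (m : ℝ) - (r : ℝ) := by linarith
      calc (q : ℝ) * (t * ((n:ℝ) * (lambda1 + ω / 4)))
          = t * ((n:ℝ) * (q:ℝ)) * (lambda1 + ω / 4) := by ring
        _ = t * ((m : ℝ) - (r : ℝ)) * (lambda1 + ω / 4) := by rw [hnq]
    rw [hqn]
    have hkey : -(t * (r:ℝ) * (lambda1 + ω / 4)) ≤ t * (n : ℝ) * |lambda1 + ω / 4| := by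
      have h1 : -(t * (r:ℝ) * (lambda1 + ω / 4)) = t * (r:ℝ) * (-(lambda1 + ω / 4)) := by ring
      rw [h1]
      apply le_trans _ hX
      apply mul_le_mul_of_nonneg_left habs1 (mul_nonneg ht_pos.le hrnn)
    have hC0' : C0 ≤ t * (ω / 4) * (m : ℝ) := hMce
    have hmnn : (0:ℝ) ≤ (m : ℝ) := Nat.cast_nonneg m
    rw [hC0_def] at hC0'
    nlinarith [mul_le_mul_of_nonneg_left hrn ht_pos.le]
  -- put everything together
  calc convPow μ m S ≤ (∫⁻ g, fT g ∂(convPow μ m)) / c := hcher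
    _ ≤ ((ENNReal.ofReal e1) ^ q * (ENNReal.ofReal b') ^ r) / c :=
        ENNReal.div_le_div_right hblock c
    _ = ENNReal.ofReal (e1 ^ q * b' ^ r) / ENNReal.ofReal e2 := by
        rw [hc_def, ← ENNReal.ofReal_pow (Real.exp_pos _).le, ← ENNReal.ofReal_pow hb'_pos.le,
          ← ENNReal.ofReal_mul (pow_nonneg (Real.exp_pos _).le q)]
    _ = ENNReal.ofReal (e1 ^ q * b' ^ r / e2) := by
        rw [ENNReal.ofReal_div_of_pos (Real.exp_pos _)]
    _ ≤ ENNReal.ofReal (Real.exp (-(t * (ω / 2)) * m)) := ENNReal.ofReal_le_ofReal hreal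


end
end

section
/- Let d, e ≥ 1 and let A be an e×d integer matrix of rank e, inducing the surjective continuous group homomorphism π' : 𝕋^d → 𝕋^e given by π'(v + ℤ^d) = Av + ℤ^e. Then there exists a constant C' ≥ 1, depending only on A, such that for every h ≥ 1 the following holds: if L is a proper closed subgroup of 𝕋^e of height at most h, then π'^{−1}(L) is a proper closed subgroup of 𝕋^d of height at most C'·h. -/
open MeasureTheory Filter

theorem Real.fact_zero_lt_one : Fact ((0 : ℝ) < 1) :=
  ⟨zero_lt_one⟩

attribute [local instance] Real.fact_zero_lt_one

noncomputable section

/-- The `d`-dimensional torus `ℝ^d/ℤ^d`. -/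
abbrev Torus (d : ℕ) : Type := Fin d → AddCircle (1 : ℝ)

/-- The Euclidean norm on `ℝ^d`. -/
def eNorm {d : ℕ} (v : Fin d → ℝ) : ℝ := Real.sqrt (∑ i, (v i) ^ 2)

/-- The canonical projection `ℝ^d → 𝕋^d`. -/
def torusMk {d : ℕ} (v : Fin d → ℝ) : Torus d := fun i => (v i : AddCircle (1 : ℝ))

/-- The quotient metric on the torus: `d(x,y) = inf {‖v - w‖ : v, w lift x, y}`. -/
def torusDist {d : ℕ} (x y : Torus d) : ℝ :=
  sInf { r : ℝ | ∃ v w : Fin d → ℝ, torusMk v = x ∧ torusMk w = y ∧ r = eNorm (v - w) }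

/-- The Haar probability measure on the torus. -/
def torusHaar (d : ℕ) : Measure (Torus d) :=
  Measure.pi fun _ => (volume : Measure (AddCircle (1 : ℝ)))

abbrev GLZ (d : ℕ) := GL (Fin d) ℤ

/-- An integer matrix, seen as a real matrix. -/
def glMatR {d : ℕ} (g : Matrix (Fin d) (Fin d) ℤ) : Matrix (Fin d) (Fin d) ℝ :=
  g.map ((↑) : ℤ → ℝ)

/-- The operator norm (w.r.t. the Euclidean norm) of an integer matrix. -/
def opNorm {d : ℕ} (g : Matrix (Fin d) (Fin d) ℤ) : ℝ :=
  ‖LinearMap.toContinuousLinearMap (Matrix.toEuclideanLin (glMatR g))‖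

/-- Action of `GL_d(ℤ)` on the torus. -/
def glSMul {d : ℕ} (g : GLZ d) (x : Torus d) : Torus d :=
  fun i => ∑ j, ((g : Matrix (Fin d) (Fin d) ℤ) i j) • x j

/-- The law `μ^{*n} * δ_x` of the `n`-th step of the random walk started at `x`. -/
def walk {d : ℕ} (μ : Measure (GLZ d)) (x : Torus d) (n : ℕ) : Measure (Torus d) :=
  (convPow μ n).map fun g => glSMul g x

/-- The character of the torus associated to `a ∈ ℤ^d`. -/
def torusChar {d : ℕ} (a : Fin d → ℤ) (x : Torus d) : ℂ := ∏ i, fourier (a i) (x i)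

/-- Fourier coefficient of a measure on the torus. -/
def measFourier {d : ℕ} (ν : Measure (Torus d)) (a : Fin d → ℤ) : ℂ :=
  ∫ x, torusChar a x ∂ν

/-- The set of atoms of a measure; for countably supported measures this is the support. -/
def measSupport {G : Type*} [MeasurableSpace G] (μ : Measure G) : Set G := {g | μ {g} ≠ 0}

/-- The linear action of `g ∈ GL_d(ℤ)` on `ℝ^d`. -/
def glLin {d : ℕ} (g : GLZ d) : (Fin d → ℝ) →ₗ[ℝ] (Fin d → ℝ) :=
  Matrix.toLin' (glMatR ↑g)

/-- A subgroup `Γ ≤ GL_d(ℤ)` acts strongly irreducibly on `ℝ^d` if there is no nonempty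
finite union of nonzero proper linear subspaces of `ℝ^d` invariant under every element
of `Γ`. -/
def StronglyIrred {d : ℕ} (Γ : Subgroup (GLZ d)) : Prop :=
  ¬ ∃ S : Finset (Submodule ℝ (Fin d → ℝ)), S.Nonempty ∧
      (∀ W ∈ S, W ≠ ⊥ ∧ W ≠ ⊤) ∧
      ∀ γ ∈ Γ, glLin γ '' (⋃ W ∈ S, (W : Set (Fin d → ℝ))) = ⋃ W ∈ S, (W : Set (Fin d → ℝ))

/-- `x` is a rational point of the torus of denominator at most `q`. -/
def IsRationalPt {d : ℕ} (x : Torus d) (q : ℝ) : Prop :=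
  ∃ q' : ℕ, 1 ≤ q' ∧ (q' : ℝ) ≤ q ∧ ∃ v : Fin d → ℤ, x = torusMk fun i => (v i : ℝ) / (q' : ℝ)

/-- `μ` has a finite exponential moment. -/
def HasFinExpMoment {d : ℕ} (μ : Measure (GLZ d)) : Prop :=
  ∃ β > (0 : ℝ), Integrable (fun g : GLZ d => (max (opNorm g.val) (opNorm (g⁻¹).val)) ^ β) μ

/-- `l` is the top Lyapunov exponent of `μ`. -/
def TopLyapunov {d : ℕ} (μ : Measure (GLZ d)) (l : ℝ) : Prop :=
  Tendsto (fun n : ℕ => (n : ℝ)⁻¹ * ∫ g, Real.log (opNorm g.val) ∂(convPow μ n)) atTop (nhds l)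

end

noncomputable section

/-- The height of a closed subgroup `L` of the torus is at most `h` if its dual
`L* = {a ∈ ℤ^n : L ⊆ ker χ_a}` is generated, as a subgroup of `ℤ^n`, by vectors of
(Euclidean) norm at most `h`. -/
def HeightLE {n : ℕ} (L : AddSubgroup (Torus n)) (h : ℝ) : Prop :=
  ∃ T : Finset (Fin n → ℤ),
    (∀ a ∈ T, eNorm (fun i => (a i : ℝ)) ≤ h) ∧
    ((AddSubgroup.closure (T : Set (Fin n → ℤ)) : AddSubgroup (Fin n → ℤ)) : Set (Fin n → ℤ))
      = { a : Fin n → ℤ | ∀ x ∈ L, torusChar a x = 1 }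

/-- The continuous group homomorphism `𝕋^d → 𝕋^e` induced by an `e × d` integer
matrix `A`, namely `v + ℤ^d ↦ Av + ℤ^e`. -/
def torusMatHom {d e : ℕ} (A : Matrix (Fin e) (Fin d) ℤ) : Torus d →+ Torus e where
  toFun x := fun i => ∑ j, A i j • x j
  map_zero' := by
    funext i
    simp
  map_add' x y := by
    funext i
    simp [smul_add, Finset.sum_add_distrib]


namespace HeightAux

open Complex Real

variable {d e : ℕ}

/-- The transpose action `ℤ^e → ℤ^d`, `a ↦ Aᵀ a`. -/
def Bhom (A : Matrix (Fin e) (Fin d) ℤ) : (Fin e → ℤ) →+ (Fin d → ℤ) where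
  toFun a := fun j => ∑ i, A i j * a i
  map_zero' := by funext j; simp
  map_add' a b := by
    funext j
    simp [mul_add, Finset.sum_add_distrib]

lemma Bhom_apply (A : Matrix (Fin e) (Fin d) ℤ) (a : Fin e → ℤ) (j : Fin d) :
    Bhom A a j = ∑ i, A i j * a i := rfl

lemma torusMk_surjective {n : ℕ} : Function.Surjective (torusMk (d := n)) := by
  intro x
  choose v hv using fun i => QuotientAddGroup.mk_surjective (x i)
  exact ⟨v, funext hv⟩

lemma torusChar_mk {n : ℕ} (c : Fin n → ℤ) (v : Fin n → ℝ) :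
    torusChar c (torusMk v) = Complex.exp (2 * π * I * ∑ j, (c j : ℝ) * v j) := by
  unfold torusChar torusMk
  simp only [fourier_coe_apply, Complex.ofReal_one, div_one]
  rw [← Complex.exp_sum]
  congr 1
  push_cast
  rw [Finset.mul_sum]
  congr 1 with j
  ring

lemma torusChar_mk_eq_one_iff {n : ℕ} (c : Fin n → ℤ) (v : Fin n → ℝ) :
    torusChar c (torusMk v) = 1 ↔ ∃ m : ℤ, ∑ j, (c j : ℝ) * v j = m := by
  rw [torusChar_mk, Complex.exp_eq_one_iff]
  have h2 : (2 * (π : ℂ) * Complex.I : ℂ) ≠ 0 := by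
    simp [Real.pi_ne_zero, Complex.I_ne_zero]
  constructor
  · rintro ⟨m, hm⟩
    refine ⟨m, ?_⟩
    have : ((∑ j, (c j : ℝ) * v j : ℝ) : ℂ) = (m : ℂ) := by
      apply mul_right_cancel₀ h2
      rw [mul_comm] at hm
      linear_combination hm
    exact_mod_cast this
  · rintro ⟨m, hm⟩
    exact ⟨m, by rw [hm]; push_cast; ring⟩

lemma torusMatHom_mk (A : Matrix (Fin e) (Fin d) ℤ) (v : Fin d → ℝ) :
    torusMatHom A (torusMk v) = torusMk ((A.map ((↑) : ℤ → ℝ)).mulVec v) := by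
  funext i
  show ∑ j, A i j • ((v j : ℝ) : AddCircle (1 : ℝ))
      = (((A.map ((↑) : ℤ → ℝ)).mulVec v i : ℝ) : AddCircle (1 : ℝ))
  have hterm : ∀ j, A i j • ((v j : ℝ) : AddCircle (1 : ℝ))
      = (((A i j : ℝ) * v j : ℝ) : AddCircle (1 : ℝ)) := by
    intro j
    have := map_zsmul (QuotientAddGroup.mk' (AddSubgroup.zmultiples (1 : ℝ))) (A i j) (v j)
    rw [show ((A i j : ℝ) * v j : ℝ) = A i j • v j by rw [zsmul_eq_mul]]
    exact this.symm
  have hsum : ((∑ j, (A i j : ℝ) * v j : ℝ) : AddCircle (1 : ℝ))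
      = ∑ j, (((A i j : ℝ) * v j : ℝ) : AddCircle (1 : ℝ)) :=
    map_sum (QuotientAddGroup.mk' (AddSubgroup.zmultiples (1 : ℝ))) _ _
  rw [Finset.sum_congr rfl fun j _ => hterm j, ← hsum]
  congr 1

lemma char_comp (A : Matrix (Fin e) (Fin d) ℤ) (a : Fin e → ℤ) (x : Torus d) :
    torusChar (Bhom A a) x = torusChar a (torusMatHom A x) := by
  obtain ⟨v, rfl⟩ := torusMk_surjective x
  rw [torusMatHom_mk, torusChar_mk, torusChar_mk]
  congr 2
  simp only [Bhom_apply, Matrix.mulVec, dotProduct, Matrix.map_apply]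
  push_cast
  simp only [Finset.sum_mul, Finset.mul_sum]
  rw [Finset.sum_comm]
  exact Finset.sum_congr rfl fun i _ => Finset.sum_congr rfl fun j _ => by ring

lemma torusMk_intCast {n : ℕ} (w : Fin n → ℤ) : torusMk (fun i => (w i : ℝ)) = 0 := by
  funext i
  show ((w i : ℝ) : AddCircle (1 : ℝ)) = 0
  rw [AddCircle.coe_eq_zero_iff]
  exact ⟨w i, by simp⟩

lemma mulVecLin_surjective (A : Matrix (Fin e) (Fin d) ℤ)
    (hrank : ((A.map ((↑) : ℤ → ℝ)).rank = e)) :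
    Function.Surjective (A.map ((↑) : ℤ → ℝ)).mulVecLin := by
  rw [← LinearMap.range_eq_top]
  apply Submodule.eq_top_of_finrank_eq
  rw [← Matrix.rank]
  simp [hrank]

lemma matHom_surjective (A : Matrix (Fin e) (Fin d) ℤ)
    (hrank : ((A.map ((↑) : ℤ → ℝ)).rank = e)) :
    Function.Surjective (torusMatHom A) := by
  intro y
  obtain ⟨w, rfl⟩ := torusMk_surjective y
  obtain ⟨v, hv⟩ := mulVecLin_surjective A hrank w
  refine ⟨torusMk v, ?_⟩
  rw [torusMatHom_mk, ← Matrix.mulVecLin_apply, hv]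

lemma matHom_continuous (A : Matrix (Fin e) (Fin d) ℤ) : Continuous (torusMatHom A) := by
  apply continuous_pi
  intro i
  show Continuous fun x : Torus d => ∑ j, A i j • x j
  exact continuous_finset_sum _ fun j _ => (continuous_zsmul (A i j)).comp (continuous_apply j)

lemma abs_le_eNorm {n : ℕ} (v : Fin n → ℝ) (i : Fin n) : |v i| ≤ eNorm v := by
  rw [← Real.sqrt_sq_eq_abs]
  apply Real.sqrt_le_sqrt
  exact Finset.single_le_sum (f := fun j => v j ^ 2) (fun j _ => sq_nonneg _) (Finset.mem_univ i)

lemma eNorm_B_le (A : Matrix (Fin e) (Fin d) ℤ) (a : Fin e → ℤ) (N : ℝ)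
    (ha : eNorm (fun i => (a i : ℝ)) ≤ N) :
    eNorm (fun j => (Bhom A a j : ℝ))
      ≤ Real.sqrt d * (∑ i, ∑ j, |(A i j : ℝ)|) * N := by
  set S : ℝ := ∑ i, ∑ j, |(A i j : ℝ)| with hS
  have hN : 0 ≤ N := le_trans (Real.sqrt_nonneg _) ha
  have hS0 : 0 ≤ S := Finset.sum_nonneg fun i _ => Finset.sum_nonneg fun j _ => abs_nonneg _
  have hcoord : ∀ j, |(Bhom A a j : ℝ)| ≤ S * N := by
    intro j
    rw [Bhom_apply]
    push_cast
    calc |∑ i, (A i j : ℝ) * (a i : ℝ)| ≤ ∑ i, |(A i j : ℝ) * (a i : ℝ)| :=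
          Finset.abs_sum_le_sum_abs _ _
      _ ≤ ∑ i, |(A i j : ℝ)| * N := by
          apply Finset.sum_le_sum
          intro i _
          rw [abs_mul]
          exact mul_le_mul_of_nonneg_left
            (le_trans (abs_le_eNorm (fun k => ((a k : ℝ))) i) ha) (abs_nonneg _)
      _ = (∑ i, |(A i j : ℝ)|) * N := (Finset.sum_mul _ _ _).symm
      _ ≤ S * N := by
          apply mul_le_mul_of_nonneg_right _ hN
          apply Finset.sum_le_sum
          intro i _
          exact Finset.single_le_sum (f := fun j' => |(A i j' : ℝ)|)
            (fun j' _ => abs_nonneg _) (Finset.mem_univ j)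
  have hsum : (∑ j, (Bhom A a j : ℝ) ^ 2) ≤ (d : ℝ) * (S * N) ^ 2 := by
    calc (∑ j, (Bhom A a j : ℝ) ^ 2) ≤ ∑ _j : Fin d, (S * N) ^ 2 := by
          apply Finset.sum_le_sum
          intro j _
          rw [← _root_.sq_abs]
          exact pow_le_pow_left₀ (abs_nonneg _) (hcoord j) 2
      _ = (d : ℝ) * (S * N) ^ 2 := by
          rw [Finset.sum_const, Finset.card_univ, Fintype.card_fin, nsmul_eq_mul]
  calc eNorm (fun j => (Bhom A a j : ℝ)) ≤ Real.sqrt ((d : ℝ) * (S * N) ^ 2) :=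
        Real.sqrt_le_sqrt hsum
    _ = Real.sqrt d * (S * N) := by
        rw [Real.sqrt_mul (by positivity), Real.sqrt_sq (by positivity)]
    _ = Real.sqrt d * S * N := by ring

lemma dual_comap (A : Matrix (Fin e) (Fin d) ℤ)
    (hrank : ((A.map ((↑) : ℤ → ℝ)).rank = e)) (L : AddSubgroup (Torus e)) :
    (Bhom A) '' {a | ∀ x ∈ L, torusChar a x = 1}
      = {c | ∀ x ∈ L.comap (torusMatHom A), torusChar c x = 1} := by
  have hs := mulVecLin_surjective A hrank
  ext c
  constructor
  · rintro ⟨a, ha, rfl⟩ x hx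
    rw [char_comp]
    exact ha _ (AddSubgroup.mem_comap.mp hx)
  · intro hc
    have hmem : ∀ (v : Fin d → ℝ) (w : Fin e → ℤ),
        (A.map ((↑) : ℤ → ℝ)).mulVec v = (fun i => (w i : ℝ)) →
        torusMk v ∈ L.comap (torusMatHom A) := by
      intro v w hw
      rw [AddSubgroup.mem_comap, torusMatHom_mk, hw, torusMk_intCast]
      exact L.zero_mem
    choose vb hvb using fun i : Fin e => hs (Pi.single i 1)
    have hvb' : ∀ i : Fin e, (A.map ((↑) : ℤ → ℝ)).mulVec (vb i)
        = fun i' => (((Pi.single i 1 : Fin e → ℤ) i' : ℤ) : ℝ) := by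
      intro i
      rw [← Matrix.mulVecLin_apply, hvb i]
      funext i'
      simp [Pi.single_apply, apply_ite]
    have hint : ∀ i : Fin e, ∃ m : ℤ, ∑ j, (c j : ℝ) * vb i j = m := by
      intro i
      rw [← torusChar_mk_eq_one_iff]
      exact hc _ (hmem (vb i) (Pi.single i 1) (hvb' i))
    choose rZ hrZ using hint
    have hker : ∀ v : Fin d → ℝ, (A.map ((↑) : ℤ → ℝ)).mulVec v = 0 →
        ∑ j, (c j : ℝ) * v j = 0 := by
      intro v hv
      by_contra hne
      have h2s : (2 * ∑ j', (c j' : ℝ) * v j') ≠ 0 := fun h => hne (by linarith)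
      obtain ⟨m, hm⟩ : ∃ m : ℤ,
          ∑ j, (c j : ℝ) * ((2 * ∑ j', (c j' : ℝ) * v j')⁻¹ • v) j = m := by
        rw [← torusChar_mk_eq_one_iff]
        exact hc _ (hmem ((2 * ∑ j', (c j' : ℝ) * v j')⁻¹ • v) (fun _ => (0 : ℤ))
          (by rw [Matrix.mulVec_smul, hv]; funext i'; simp))
      have hts : ∑ j, (c j : ℝ) * ((2 * ∑ j', (c j' : ℝ) * v j')⁻¹ • v) j
          = (2 * ∑ j', (c j' : ℝ) * v j')⁻¹ * ∑ j', (c j' : ℝ) * v j' := by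
        simp only [Pi.smul_apply, smul_eq_mul, Finset.mul_sum]
        exact Finset.sum_congr rfl fun j _ => by ring
      rw [hts] at hm
      have h2m : (2 : ℝ) * m = 1 := by
        rw [← hm]
        calc (2 : ℝ) * ((2 * ∑ j', (c j' : ℝ) * v j')⁻¹ * ∑ j', (c j' : ℝ) * v j')
            = (2 * ∑ j', (c j' : ℝ) * v j')⁻¹ * (2 * ∑ j', (c j' : ℝ) * v j') := by ring
          _ = 1 := inv_mul_cancel₀ h2s
      have h1 : (2 : ℤ) * m = 1 := by exact_mod_cast h2m
      omega
    have hv : ∀ v : Fin d → ℝ,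
        ∑ j, (c j : ℝ) * v j = ∑ i, ((A.map ((↑) : ℤ → ℝ)).mulVec v) i * (rZ i : ℝ) := by
      intro v
      set t : Fin e → ℝ := (A.map ((↑) : ℤ → ℝ)).mulVec v with ht
      set v0 : Fin d → ℝ := v - ∑ i, t i • vb i with hv0
      have h0 : (A.map ((↑) : ℤ → ℝ)).mulVec v0 = 0 := by
        have : (A.map ((↑) : ℤ → ℝ)).mulVecLin v0 = 0 := by
          rw [hv0, map_sub, map_sum]
          simp only [_root_.map_smul, hvb]
          have : ∑ i, t i • (Pi.single i 1 : Fin e → ℝ) = t := by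
            funext i'
            simp [Pi.single_apply, Finset.sum_ite_eq']
          rw [this, Matrix.mulVecLin_apply, ← ht, sub_self]
        rwa [Matrix.mulVecLin_apply] at this
      have e1 := hker v0 h0
      have e2 : ∑ j, (c j : ℝ) * v0 j
          = ∑ j, (c j : ℝ) * v j - ∑ i, t i * (rZ i : ℝ) := by
        simp only [hv0, Pi.sub_apply, Finset.sum_apply, Pi.smul_apply, smul_eq_mul, mul_sub]
        rw [Finset.sum_sub_distrib]
        congr 1
        simp only [Finset.mul_sum]
        rw [Finset.sum_comm]
        refine Finset.sum_congr rfl fun i _ => ?_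
        rw [← hrZ i, Finset.mul_sum]
        exact Finset.sum_congr rfl fun j _ => by ring
      rw [e2] at e1
      linarith [e1]
    have hBc : Bhom A rZ = c := by
      funext j
      have hvj := hv (Pi.single j 1)
      have hL : ∑ j', (c j' : ℝ) * (Pi.single j 1 : Fin d → ℝ) j' = (c j : ℝ) := by
        simp [Pi.single_apply, mul_ite, Finset.sum_ite_eq']
      have hR : ∀ i, ((A.map ((↑) : ℤ → ℝ)).mulVec (Pi.single j 1)) i = (A i j : ℝ) := by
        intro i
        simp [Matrix.mulVec, dotProduct, Pi.single_apply, mul_ite,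
          Finset.sum_ite_eq', Matrix.map_apply]
      rw [hL] at hvj
      simp only [hR] at hvj
      have hcast : (c j : ℝ) = ((∑ i, A i j * rZ i : ℤ) : ℝ) := by
        rw [hvj]; push_cast; ring_nf
      rw [Bhom_apply]
      exact_mod_cast hcast.symm
    refine ⟨rZ, ?_, hBc⟩
    intro y hy
    obtain ⟨x, rfl⟩ := matHom_surjective A hrank y
    rw [← char_comp, hBc]
    exact hc x (AddSubgroup.mem_comap.mpr hy)

end HeightAux

/-- **Heights of preimage subgroups** (the Lemma in Section 5 of the paper): the
preimage under a surjection of tori of a proper closed subgroup of height `≤ h` is a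
proper closed subgroup of height `≤ C'·h`, with `C'` depending only on the surjection. -/
theorem height_of_preimage_subgroup
    (d e : ℕ) (hd : 1 ≤ d) (he : 1 ≤ e)
    (A : Matrix (Fin e) (Fin d) ℤ)
    (hrank : ((A.map ((↑) : ℤ → ℝ)).rank = e)) :
    ∃ C' : ℝ, 1 ≤ C' ∧
      ∀ h : ℝ, 1 ≤ h →
        ∀ L : AddSubgroup (Torus e), IsClosed (L : Set (Torus e)) → L ≠ ⊤ →
          HeightLE L h →
          (L.comap (torusMatHom A) ≠ ⊤ ∧
           IsClosed ((L.comap (torusMatHom A) : AddSubgroup (Torus d)) : Set (Torus d)) ∧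
           HeightLE (L.comap (torusMatHom A)) (C' * h)) := by
  classical
  set C' : ℝ := max 1 (Real.sqrt d * (∑ i, ∑ j, |(A i j : ℝ)|)) with hC'
  refine ⟨C', le_max_left _ _, ?_⟩
  intro h hh L hLclosed hLtop hLheight
  obtain ⟨T, hTnorm, hTclosure⟩ := hLheight
  refine ⟨?_, ?_, ?_⟩
  · intro htop
    apply hLtop
    rw [AddSubgroup.eq_top_iff']
    intro y
    obtain ⟨x, rfl⟩ := HeightAux.matHom_surjective A hrank y
    exact AddSubgroup.mem_comap.mp (htop ▸ AddSubgroup.mem_top x)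
  · exact hLclosed.preimage (HeightAux.matHom_continuous A)
  · refine ⟨T.image (HeightAux.Bhom A), ?_, ?_⟩
    · intro b hb
      obtain ⟨a, ha, rfl⟩ := Finset.mem_image.mp hb
      calc eNorm (fun j => (HeightAux.Bhom A a j : ℝ))
          ≤ Real.sqrt d * (∑ i, ∑ j, |(A i j : ℝ)|) * h :=
            HeightAux.eNorm_B_le A a h (hTnorm a ha)
        _ ≤ C' * h := by
            apply mul_le_mul_of_nonneg_right (le_max_right _ _)
            linarith
    · rw [Finset.coe_image, ← AddMonoidHom.map_closure, AddSubgroup.coe_map, hTclosure]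
      exact HeightAux.dual_comap A hrank L


end
end
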